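/- arXiv:math/0703574 — 3 statements merged into one kernel-verified Lean document; each statement's English description precedes it below -/
import Mathlib

section
/- If u₀ and u₁ are nontrivial real solutions of -(p u_j')' + q_j u_j = 0 with W_{x₀}(u₀,u₁) = 0, then the product u₀(t)u₁(t) does not change sign at t = x₀; i.e., there is ε > 0 such that u₀ u₁ has the same sign (≥ 0 throughout or ≤ 0 throughout) on (x₀-ε, x₀+ε). -/
open Set Filter

private lemma eventually_to_Ioo {x0 : ℝ} {P : ℝ → Prop} (h : ∀ᶠ t in nhds x0, P t) :
    ∃ ε > 0, ∀ t ∈ Ioo (x0 - ε) (x0 + ε), P t := by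
  rcases Metric.eventually_nhds_iff.mp h with ⟨ε, hε, hball⟩
  refine ⟨ε, hε, fun t ht => hball ?_⟩
  rw [Real.dist_eq, abs_sub_lt_iff]
  constructor <;> [linarith [ht.2]; linarith [ht.1]]

/-- If `u₀`, `u₁` are nontrivial solutions of `-(p uⱼ')' + qⱼ uⱼ = 0` and their
modified Wronskian vanishes at `x₀`, then the product `u₀ u₁` does not change sign
at `x₀`: it is of one sign on a whole neighborhood `(x₀ - ε, x₀ + ε)`. -/
theorem product_no_sign_change_at_wronskian_zero
    (a b : ℝ) (p q0 q1 u0 u0' u1 u1' : ℝ → ℝ) (x0 : ℝ) (hx0 : x0 ∈ Ioo a b)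
    (hp : ∀ x ∈ Ioo a b, 0 < p x)
    (hu0 : ∀ x ∈ Ioo a b, HasDerivAt u0 (u0' x) x)
    (hu1 : ∀ x ∈ Ioo a b, HasDerivAt u1 (u1' x) x)
    (hpu0 : ∀ x ∈ Ioo a b, HasDerivAt (fun y => p y * u0' y) (q0 x * u0 x) x)
    (hpu1 : ∀ x ∈ Ioo a b, HasDerivAt (fun y => p y * u1' y) (q1 x * u1 x) x)
    (hnt0 : ∀ x ∈ Ioo a b, (u0 x, p x * u0' x) ≠ (0, 0))
    (hnt1 : ∀ x ∈ Ioo a b, (u1 x, p x * u1' x) ≠ (0, 0))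
    (hW : u0 x0 * (p x0 * u1' x0) - (p x0 * u0' x0) * u1 x0 = 0) :
    ∃ ε > 0, (∀ t ∈ Ioo (x0 - ε) (x0 + ε), 0 ≤ u0 t * u1 t) ∨
             (∀ t ∈ Ioo (x0 - ε) (x0 + ε), u0 t * u1 t ≤ 0) := by
  have hp0 := hp x0 hx0
  by_cases h0 : u0 x0 = 0
  · -- both vanish at x0
    have hpu0' : p x0 * u0' x0 ≠ 0 := fun h => hnt0 x0 hx0 (by simp [h0, h])
    have h1 : u1 x0 = 0 := by
      have h2 : (p x0 * u0' x0) * u1 x0 = 0 := by rw [h0] at hW; linarith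
      exact (mul_eq_zero.mp h2).resolve_left hpu0'
    have hd0 : u0' x0 ≠ 0 := fun h => hpu0' (by rw [h, mul_zero])
    have hd1 : u1' x0 ≠ 0 := by
      intro h
      exact hnt1 x0 hx0 (by simp [h1, h])
    have t0 := hasDerivAt_iff_tendsto_slope.mp (hu0 x0 hx0)
    have t1 := hasDerivAt_iff_tendsto_slope.mp (hu1 x0 hx0)
    have tp : Tendsto (fun t => slope u0 x0 t * slope u1 x0 t) (nhdsWithin x0 {x0}ᶜ)
        (nhds (u0' x0 * u1' x0)) := t0.mul t1
    have hc : u0' x0 * u1' x0 ≠ 0 := mul_ne_zero hd0 hd1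
    -- key: for t ≠ x0, u0 t * u1 t = (slope0 * slope1) * (t - x0)^2
    have key : ∀ t : ℝ, t ≠ x0 →
        u0 t * u1 t = (slope u0 x0 t * slope u1 x0 t) * (t - x0) ^ 2 := by
      intro t ht
      have hne : t - x0 ≠ 0 := sub_ne_zero.mpr ht
      rw [slope_def_field, slope_def_field, h0, h1, sub_zero, sub_zero]
      have e0 : u0 t / (t - x0) * (t - x0) = u0 t := div_mul_cancel₀ _ hne
      have e1 : u1 t / (t - x0) * (t - x0) = u1 t := div_mul_cancel₀ _ hne
      calc u0 t * u1 t = (u0 t / (t - x0) * (t - x0)) * (u1 t / (t - x0) * (t - x0)) := by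
            rw [e0, e1]
        _ = u0 t / (t - x0) * (u1 t / (t - x0)) * (t - x0) ^ 2 := by ring
    rcases hc.lt_or_gt with hneg | hpos
    · -- product ≤ 0 near x0
      have hev : ∀ᶠ t in nhdsWithin x0 {x0}ᶜ,
          slope u0 x0 t * slope u1 x0 t < 0 :=
        tp.eventually (eventually_lt_nhds hneg)
      rw [eventually_nhdsWithin_iff] at hev
      obtain ⟨ε, hε, hP⟩ := eventually_to_Ioo hev
      refine ⟨ε, hε, Or.inr fun t ht => ?_⟩
      by_cases htx : t = x0
      · simp [htx, h0]
      · rw [key t htx]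
        have := hP t ht htx
        nlinarith [sq_nonneg (t - x0)]
    · have hev : ∀ᶠ t in nhdsWithin x0 {x0}ᶜ,
          0 < slope u0 x0 t * slope u1 x0 t :=
        tp.eventually (eventually_gt_nhds hpos)
      rw [eventually_nhdsWithin_iff] at hev
      obtain ⟨ε, hε, hP⟩ := eventually_to_Ioo hev
      refine ⟨ε, hε, Or.inl fun t ht => ?_⟩
      by_cases htx : t = x0
      · simp [htx, h0]
      · rw [key t htx]
        have := hP t ht htx
        nlinarith [sq_nonneg (t - x0)]
  · -- u0 x0 ≠ 0, then u1 x0 ≠ 0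
    have h1 : u1 x0 ≠ 0 := by
      intro h1
      have hpu1' : p x0 * u1' x0 ≠ 0 := fun h => hnt1 x0 hx0 (by simp [h1, h])
      have h2 : u0 x0 * (p x0 * u1' x0) = 0 := by rw [h1] at hW; linarith
      exact hpu1' ((mul_eq_zero.mp h2).resolve_left h0)
    have hcont : Tendsto (fun t => u0 t * u1 t) (nhds x0) (nhds (u0 x0 * u1 x0)) :=
      ((hu0 x0 hx0).continuousAt.mul (hu1 x0 hx0).continuousAt)
    rcases (mul_ne_zero h0 h1).lt_or_gt with hneg | hpos
    · obtain ⟨ε, hε, hP⟩ := eventually_to_Ioo (hcont.eventually (eventually_lt_nhds hneg))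
      exact ⟨ε, hε, Or.inr fun t ht => (hP t ht).le⟩
    · obtain ⟨ε, hε, hP⟩ := eventually_to_Ioo (hcont.eventually (eventually_gt_nhds hpos))
      exact ⟨ε, hε, Or.inl fun t ht => (hP t ht).le⟩
end

section
/- Sign of the Prüfer angle difference near a zero of the Wronskian: let u₀, u₁ be nontrivial solutions of -(pu_j')' + q_j u_j = 0 with Prüfer angles θ₀, θ₁ and Δ(x) = θ₁(x) - θ₀(x). Suppose Δ(x₀) ≡ 0 mod π. If q₀ - q₁ > 0 almost everywhere on (x₀, x₀+ε), then Δ(x) > Δ(x₀) for x ∈ (x₀, x₀+ε); if q₀ - q₁ < 0 a.e. there, then Δ(x) < Δ(x₀); and if q₀ = q₁ a.e. there, then Δ(x) = Δ(x₀). -/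
/-!
The Wronskian `W = u₁ (p u₀') - u₀ (p u₁')` equals `ρ₁ ρ₀ sin (θ₁ - θ₀)` and has derivative
`(q₀ - q₁) u₀ u₁`. Replacing `u₀` by `(-1)ᵏ u₀` shifts `θ₀` by `kπ`, so we may assume that the
angles agree at `x₀`. Near a point where they agree, `u₀ u₁ > 0` off that point, so `W` is monotone
there when `q₀ ≥ q₁` a.e.: a differentiable function maps null sets, and the set where its
derivative vanishes, to null sets, so an a.e. sign of the derivative suffices. Since `W` vanishes
at the point and has the sign of `θ₁ - θ₀` nearby, `θ₁ - θ₀` can never cross `0` downwards (nor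
touch it from above when `q₀ > q₁` a.e., as `W` is then strictly monotone).
-/

open Set Real MeasureTheory Filter Topology

theorem sin_nonneg_iff_of_mem_Ioo {x : ℝ} (hx : x ∈ Ioo (-π) π) : 0 ≤ sin x ↔ 0 ≤ x :=
  ⟨fun h => not_lt.1 fun hneg => (sin_neg_of_neg_of_neg_pi_lt hneg hx.1).not_ge h,
    fun h => sin_nonneg_of_nonneg_of_le_pi h hx.2.le⟩

theorem ContinuousOn.exists_mem_Ico_eq_forall_Ioc_lt {g : ℝ → ℝ} {s t y : ℝ} (hst : s ≤ t)
    (hg : ContinuousOn g (Icc s t)) (hs : y ≤ g s) (ht : g t < y) :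
    ∃ c ∈ Ico s t, g c = y ∧ ∀ z ∈ Ioc c t, g z < y := by
  have hK : IsCompact (Icc s t ∩ g ⁻¹' Ici y) := isCompact_Icc.of_isClosed_subset
    (hg.preimage_isClosed_of_isClosed isClosed_Icc isClosed_Ici) inter_subset_left
  obtain ⟨c, ⟨hc, hyc⟩, hmax⟩ := hK.exists_isGreatest ⟨s, left_mem_Icc.2 hst, hs⟩
  have hct : c < t := hc.2.lt_of_ne <| by rintro rfl; exact ht.not_ge hyc
  have hlt : ∀ z ∈ Ioc c t, g z < y := fun z hz =>
    not_le.1 fun h => hz.1.not_ge (hmax ⟨⟨hc.1.trans hz.1.le, hz.2⟩, h⟩)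
  have hcont : ContinuousWithinAt g (Ioi c) c := (hg c hc).mono_of_mem_nhdsWithin
    (mem_of_superset (Ioc_mem_nhdsGT hct) fun z hz => ⟨hc.1.trans hz.1.le, hz.2⟩)
  refine ⟨c, ⟨hc.1, hct⟩, le_antisymm ?_ hyc, hlt⟩
  exact le_of_tendsto hcont.tendsto
    (eventually_of_mem (Ioc_mem_nhdsGT hct) fun z hz => (hlt z hz).le)

theorem volume_image_setOf_nonpos_eq_zero {f f' : ℝ → ℝ} {U : Set ℝ} (hU : MeasurableSet U)
    (hf : ∀ x ∈ U, HasDerivAt f (f' x) x) (hf' : ∀ᵐ x ∂volume.restrict U, 0 ≤ f' x) :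
    volume (f '' {x ∈ U | f' x ≤ 0}) = 0 := by
  have hsplit : {x ∈ U | f' x ≤ 0} = {x ∈ U | f' x < 0} ∪ {x ∈ U | f' x = 0} := by
    ext x; simp only [mem_ofPred_eq, mem_union, le_iff_lt_or_eq, and_or_left]
  rw [hsplit, image_union]
  refine measure_union_null ?_ ?_
  · refine addHaar_image_eq_zero_of_differentiableOn_of_addHaar_eq_zero volume
      (fun x hx => (hf x hx.1).differentiableAt.differentiableWithinAt) ?_
    have h := ae_iff.1 ((ae_restrict_iff' hU).1 hf')
    simpa only [Classical.not_imp, not_le] using h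
  · refine addHaar_image_eq_zero_of_det_fderivWithin_eq_zero volume
      (fun x hx => (hf x hx.1).hasFDerivAt.hasFDerivWithinAt) fun x hx => ?_
    simp [hx.2]

theorem monotoneOn_of_hasDerivAt_of_ae_nonneg {f f' : ℝ → ℝ} {a b : ℝ}
    (hf : ContinuousOn f (Icc a b)) (hf' : ∀ x ∈ Ioo a b, HasDerivAt f (f' x) x)
    (hf'₀ : ∀ᵐ x ∂volume.restrict (Ioo a b), 0 ≤ f' x) :
    MonotoneOn f (Icc a b) := by
  intro s hs t ht hst
  by_contra! hlt
  -- a level `y` between `f t` and `f s` avoiding the null set of values taken where `f' ≤ 0`: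
  -- at the last crossing of `y` the derivative is `≤ 0`, a contradiction
  set B := f '' {x ∈ Ioo a b | f' x ≤ 0}
  have hB : volume B = 0 := volume_image_setOf_nonpos_eq_zero measurableSet_Ioo hf' hf'₀
  obtain ⟨y, hy, hyB⟩ : (Ioo (f t) (f s) \ B).Nonempty := by
    refine nonempty_of_measure_ne_zero (μ := volume) ?_
    rw [measure_sdiff_null hB, Real.volume_Ioo]
    simpa using hlt
  obtain ⟨c, hc, hcy, hlt'⟩ :=
    (hf.mono (Icc_subset_Icc hs.1 ht.2)).exists_mem_Ico_eq_forall_Ioc_lt hst hy.2.le hy.1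
  have hsc : s < c := hc.1.lt_of_ne <| by rintro rfl; exact hy.2.ne' hcy
  have hcI : c ∈ Ioo a b := ⟨hs.1.trans_lt hsc, hc.2.trans_le ht.2⟩
  have hderiv : f' c ≤ 0 := by
    refine le_of_tendsto ((hasDerivAt_iff_tendsto_slope.1 (hf' c hcI)).mono_left
      (nhdsGT_le_nhdsNE c)) ?_
    filter_upwards [Ioc_mem_nhdsGT hc.2] with z hz
    rw [slope_def_field, hcy]
    exact div_nonpos_of_nonpos_of_nonneg (by linarith [hlt' z hz]) (by linarith [hz.1])
  exact hyB ⟨c, ⟨hcI, hderiv⟩, hcy⟩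

theorem strictMonoOn_of_hasDerivAt_of_ae_pos {f f' : ℝ → ℝ} {a b : ℝ}
    (hf : ContinuousOn f (Icc a b)) (hf' : ∀ x ∈ Ioo a b, HasDerivAt f (f' x) x)
    (hf'₀ : ∀ᵐ x ∂volume.restrict (Ioo a b), 0 < f' x) :
    StrictMonoOn f (Icc a b) := by
  have hmono := monotoneOn_of_hasDerivAt_of_ae_nonneg hf hf' (hf'₀.mono fun _ h => h.le)
  intro s hs t ht hst
  refine (hmono hs ht hst.le).lt_of_ne fun heq => ?_
  have hsub : Ioo s t ⊆ Ioo a b := Ioo_subset_Ioo hs.1 ht.2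
  have hzero : ∀ z ∈ Ioo s t, f' z = 0 := by
    intro z hz
    have hconst : f =ᶠ[𝓝 z] fun _ => f s := by
      filter_upwards [Ioo_mem_nhds hz.1 hz.2] with w hw
      have hw' : w ∈ Icc a b := Ioo_subset_Icc_self (hsub hw)
      exact le_antisymm (heq ▸ hmono hw' ht hw.2.le) (hmono hs hw' hw.1.le)
    exact (hf' z (hsub hz)).unique ((hasDerivAt_const z (f s)).congr_of_eventuallyEq hconst)
  have hnull : volume.restrict (Ioo s t) = 0 := by
    rw [← ae_eq_bot, ← eventually_false_iff_eq_bot]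
    filter_upwards [ae_restrict_of_ae_restrict_of_subset hsub hf'₀,
      ae_restrict_mem measurableSet_Ioo] with z hpos hz
    exact hpos.ne' (hzero z hz)
  rw [Measure.restrict_eq_zero, Real.volume_Ioo, ENNReal.ofReal_eq_zero] at hnull
  linarith

theorem le_of_eventually_le_nhdsGT {f g : ℝ → ℝ} {a b : ℝ} (hf : ContinuousOn f (Ico a b))
    (hg : ContinuousOn g (Ico a b)) (ha : f a ≤ g a)
    (hloc : ∀ c ∈ Ico a b, f c = g c → ∀ᶠ x in 𝓝[>] c, f x ≤ g x) :
    ∀ x ∈ Ico a b, f x ≤ g x := by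
  intro x hx
  by_contra! hlt
  obtain ⟨c, hc, hc0, hneg⟩ := ((hg.sub hf).mono (Icc_subset_Ico_right hx.2)
    ).exists_mem_Ico_eq_forall_Ioc_lt hx.1 (sub_nonneg.2 ha) (sub_neg.2 hlt)
  obtain ⟨z, hle, hz⟩ :=
    ((hloc c ⟨hc.1, hc.2.trans hx.2⟩ (sub_eq_zero.1 hc0).symm).and (Ioc_mem_nhdsGT hc.2)).exists
  exact (sub_neg.1 (hneg z hz)).not_ge hle

theorem lt_of_eventually_le_nhdsGT_of_eventually_lt_nhdsLT {f g : ℝ → ℝ} {a b : ℝ}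
    (hf : ContinuousOn f (Ico a b)) (hg : ContinuousOn g (Ico a b)) (ha : f a ≤ g a)
    (hright : ∀ c ∈ Ico a b, f c = g c → ∀ᶠ x in 𝓝[>] c, f x ≤ g x)
    (hleft : ∀ c ∈ Ioo a b, f c = g c → ∀ᶠ x in 𝓝[<] c, g x < f x) :
    ∀ x ∈ Ioo a b, f x < g x := by
  have hle := le_of_eventually_le_nhdsGT hf hg ha hright
  intro x hx
  refine (hle x (Ioo_subset_Ico_self hx)).lt_of_ne fun heq => ?_
  obtain ⟨z, hlt, hz⟩ := ((hleft x hx heq).and (Ioo_mem_nhdsLT hx.1)).exists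
  exact (hle z ⟨hz.1.le, hz.2.trans hx.2⟩).not_gt hlt

theorem HasDerivAt.eventually_pos_mul {f g : ℝ → ℝ} {f' g' c : ℝ} (hf : HasDerivAt f f' c)
    (hg : HasDerivAt g g' c) (hf0 : f c = 0) (hg0 : g c = 0) (h : 0 < f' * g') :
    ∀ᶠ z in 𝓝[≠] c, 0 < f z * g z := by
  have hslope := (hasDerivAt_iff_tendsto_slope.1 hf).mul (hasDerivAt_iff_tendsto_slope.1 hg)
  filter_upwards [hslope.eventually (eventually_gt_nhds h), self_mem_nhdsWithin] with z hz hzc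
  have hzc : z - c ≠ 0 := sub_ne_zero.2 hzc
  have hprod : f z * g z = slope f c z * slope g c z * (z - c) ^ 2 := by
    rw [slope_def_field, slope_def_field, hf0, hg0, sub_zero, sub_zero]
    field_simp
  rw [hprod]
  exact mul_pos hz (by positivity)

structure PruferSolution (a b : ℝ) (p q u u' ρ θ : ℝ → ℝ) : Prop where
  hasDerivAt : ∀ x ∈ Ioo a b, HasDerivAt u (u' x) x
  hasDerivAt_mul : ∀ x ∈ Ioo a b, HasDerivAt (fun y => p y * u' y) (q x * u x) x
  continuousOn : ContinuousOn θ (Ioo a b)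
  polar : ∀ x ∈ Ioo a b, 0 < ρ x ∧ u x = ρ x * sin (θ x) ∧ p x * u' x = ρ x * cos (θ x)

def wronskian (p u u' v v' : ℝ → ℝ) (x : ℝ) : ℝ := u x * (p x * v' x) - v x * (p x * u' x)

namespace PruferSolution

variable {a b : ℝ} {p q q0 q1 u u' u0 u0' u1 u1' ρ θ ρ0 θ0 ρ1 θ1 : ℝ → ℝ}

theorem add_int_mul_pi (h : PruferSolution a b p q u u' ρ θ) (k : ℤ) :
    PruferSolution a b p q (fun x => (-1) ^ k * u x) (fun x => (-1) ^ k * u' x) ρ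
      (fun x => θ x + k * π) where
  hasDerivAt x hx := (h.hasDerivAt x hx).const_mul _
  hasDerivAt_mul x hx := by
    have e : (fun y => p y * ((-1) ^ k * u' y)) = fun y => (-1) ^ k * (p y * u' y) := by
      ext y; ring
    rw [e]
    exact ((h.hasDerivAt_mul x hx).const_mul _).congr_deriv (by ring)
  continuousOn := h.continuousOn.add continuousOn_const
  polar x hx := by
    obtain ⟨hρ, hu, hv⟩ := h.polar x hx
    refine ⟨hρ, ?_, ?_⟩
    · rw [sin_add_int_mul_pi, hu]; ring
    · rw [cos_add_int_mul_pi, mul_left_comm, hv, mul_left_comm]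

variable (h0 : PruferSolution a b p q0 u0 u0' ρ0 θ0) (h1 : PruferSolution a b p q1 u1 u1' ρ1 θ1)
include h0 h1

theorem hasDerivAt_wronskian {x : ℝ} (hx : x ∈ Ioo a b) :
    HasDerivAt (wronskian p u1 u1' u0 u0') ((q0 x - q1 x) * (u0 x * u1 x)) x :=
  (((h1.hasDerivAt x hx).mul (h0.hasDerivAt_mul x hx)).sub
    ((h0.hasDerivAt x hx).mul (h1.hasDerivAt_mul x hx))).congr_deriv (by ring)

theorem wronskian_eq {x : ℝ} (hx : x ∈ Ioo a b) :
    wronskian p u1 u1' u0 u0' x = ρ1 x * ρ0 x * sin (θ1 x - θ0 x) := by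
  obtain ⟨-, hu0, hv0⟩ := h0.polar x hx
  obtain ⟨-, hu1, hv1⟩ := h1.polar x hx
  rw [wronskian, hu0, hv0, hu1, hv1, sin_sub]
  ring

theorem wronskian_nonneg_iff {x : ℝ} (hx : x ∈ Ioo a b) (hΔ : θ1 x - θ0 x ∈ Ioo (-π) π) :
    0 ≤ wronskian p u1 u1' u0 u0' x ↔ θ0 x ≤ θ1 x := by
  rw [h0.wronskian_eq h1 hx, mul_nonneg_iff_of_pos_left
    (mul_pos (h1.polar x hx).1 (h0.polar x hx).1), sin_nonneg_iff_of_mem_Ioo hΔ, sub_nonneg]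

theorem wronskian_eq_zero {c : ℝ} (hc : c ∈ Ioo a b) (hθ : θ0 c = θ1 c) :
    wronskian p u1 u1' u0 u0' c = 0 := by
  rw [h0.wronskian_eq h1 hc, hθ, sub_self, sin_zero, mul_zero]

/-- Either `u₀ c` and `u₁ c` are nonzero of the same sign, or both vanish and then `u₀' c` and
`u₁' c` are nonzero of the same sign. -/
theorem eventually_pos_mul {c : ℝ} (hc : c ∈ Ioo a b) (hθ : θ0 c = θ1 c) :
    ∀ᶠ z in 𝓝[≠] c, 0 < u0 z * u1 z := by
  obtain ⟨hρ0, hu0, hv0⟩ := h0.polar c hc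
  obtain ⟨hρ1, hu1, hv1⟩ := h1.polar c hc
  rw [← hθ] at hu1 hv1
  by_cases hs : sin (θ0 c) = 0
  · have hcos : cos (θ0 c) ^ 2 = 1 := by nlinarith [sin_sq_add_cos_sq (θ0 c)]
    refine (h0.hasDerivAt c hc).eventually_pos_mul (h1.hasDerivAt c hc)
      (by rw [hu0, hs, mul_zero]) (by rw [hu1, hs, mul_zero]) ?_
    have hprod : p c ^ 2 * (u0' c * u1' c) = ρ0 c * ρ1 c := by
      calc p c ^ 2 * (u0' c * u1' c) = (p c * u0' c) * (p c * u1' c) := by ring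
        _ = ρ0 c * ρ1 c * cos (θ0 c) ^ 2 := by rw [hv0, hv1]; ring
        _ = ρ0 c * ρ1 c := by rw [hcos, mul_one]
    exact pos_of_mul_pos_right (hprod ▸ mul_pos hρ0 hρ1) (sq_nonneg _)
  · have hpos : 0 < u0 c * u1 c := by
      rw [hu0, hu1]
      nlinarith [mul_pos hρ0 hρ1, sq_pos_of_ne_zero hs]
    exact ((h0.hasDerivAt c hc).continuousAt.mul (h1.hasDerivAt c hc).continuousAt
      |>.eventually (lt_mem_nhds hpos)).filter_mono nhdsWithin_le_nhds

theorem eventually_mem_and_pos_mul_and_mem_Ioo {c : ℝ} (hc : c ∈ Ioo a b) (hθ : θ0 c = θ1 c) :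
    ∀ᶠ z in 𝓝[≠] c, z ∈ Ioo a b ∧ 0 < u0 z * u1 z ∧ θ1 z - θ0 z ∈ Ioo (-π) π := by
  have hΔ : ContinuousAt (fun z => θ1 z - θ0 z) c :=
    (h1.continuousOn.sub h0.continuousOn).continuousAt (Ioo_mem_nhds hc.1 hc.2)
  have hΔc : θ1 c - θ0 c = 0 := by rw [hθ, sub_self]
  have hmem : ∀ᶠ z in 𝓝[≠] c, z ∈ Ioo a b := mem_nhdsWithin_of_mem_nhds (Ioo_mem_nhds hc.1 hc.2)
  have hsmall : ∀ᶠ z in 𝓝[≠] c, θ1 z - θ0 z ∈ Ioo (-π) π := mem_nhdsWithin_of_mem_nhds <|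
    hΔ.preimage_mem_nhds (hΔc ▸ Ioo_mem_nhds (neg_neg_of_pos pi_pos) pi_pos)
  exact hmem.and ((h0.eventually_pos_mul h1 hc hθ).and hsmall)

theorem eventually_le_nhdsGT {c r : ℝ} (hc : c ∈ Ioo a b) (hθ : θ0 c = θ1 c) (hcr : c < r)
    (hq : ∀ᵐ x ∂volume.restrict (Ioo c r), 0 ≤ q0 x - q1 x) :
    ∀ᶠ z in 𝓝[>] c, θ0 z ≤ θ1 z := by
  obtain ⟨r', hcr', hr'⟩ := mem_nhdsGT_iff_exists_Ioc_subset.1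
    (((h0.eventually_mem_and_pos_mul_and_mem_Ioo h1 hc hθ).filter_mono (nhdsGT_le_nhdsNE c)).and
      (Ioo_mem_nhdsGT hcr))
  have hmono : MonotoneOn (wronskian p u1 u1' u0 u0') (Icc c r') := by
    have hderiv : ∀ z ∈ Icc c r', HasDerivAt (wronskian p u1 u1' u0 u0')
        ((q0 z - q1 z) * (u0 z * u1 z)) z := fun z hz =>
      h0.hasDerivAt_wronskian h1 <| hz.1.eq_or_lt.elim (· ▸ hc) fun h => (hr' ⟨h, hz.2⟩).1.1
    refine monotoneOn_of_hasDerivAt_of_ae_nonneg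
      (fun z hz => (hderiv z hz).continuousAt.continuousWithinAt)
      (fun z hz => hderiv z (Ioo_subset_Icc_self hz)) ?_
    have hsub : Ioo c r' ⊆ Ioo c r := fun z hz => ⟨hz.1, (hr' (Ioo_subset_Ioc_self hz)).2.2⟩
    filter_upwards [ae_restrict_of_ae_restrict_of_subset hsub hq,
      ae_restrict_mem measurableSet_Ioo] with z hq hz
    exact mul_nonneg hq (hr' (Ioo_subset_Ioc_self hz)).1.2.1.le
  filter_upwards [Ioc_mem_nhdsGT hcr'] with z hz
  obtain ⟨⟨hzI, -, hΔ⟩, -⟩ := hr' hz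
  rw [← h0.wronskian_nonneg_iff h1 hzI hΔ, ← h0.wronskian_eq_zero h1 hc hθ]
  exact hmono ⟨le_rfl, hcr'.le⟩ ⟨hz.1.le, hz.2⟩ hz.1.le

theorem eventually_lt_nhdsLT {c l : ℝ} (hc : c ∈ Ioo a b) (hθ : θ0 c = θ1 c) (hlc : l < c)
    (hq : ∀ᵐ x ∂volume.restrict (Ioo l c), 0 < q0 x - q1 x) :
    ∀ᶠ z in 𝓝[<] c, θ1 z < θ0 z := by
  obtain ⟨l', hlc', hl'⟩ := mem_nhdsLT_iff_exists_Ico_subset.1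
    (((h0.eventually_mem_and_pos_mul_and_mem_Ioo h1 hc hθ).filter_mono (nhdsLT_le_nhdsNE c)).and
      (Ioo_mem_nhdsLT hlc))
  have hmono : StrictMonoOn (wronskian p u1 u1' u0 u0') (Icc l' c) := by
    have hderiv : ∀ z ∈ Icc l' c, HasDerivAt (wronskian p u1 u1' u0 u0')
        ((q0 z - q1 z) * (u0 z * u1 z)) z := fun z hz =>
      h0.hasDerivAt_wronskian h1 <| hz.2.eq_or_lt.elim (· ▸ hc) fun h => (hl' ⟨hz.1, h⟩).1.1
    refine strictMonoOn_of_hasDerivAt_of_ae_pos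
      (fun z hz => (hderiv z hz).continuousAt.continuousWithinAt)
      (fun z hz => hderiv z (Ioo_subset_Icc_self hz)) ?_
    have hsub : Ioo l' c ⊆ Ioo l c := fun z hz => ⟨(hl' (Ioo_subset_Ico_self hz)).2.1, hz.2⟩
    filter_upwards [ae_restrict_of_ae_restrict_of_subset hsub hq,
      ae_restrict_mem measurableSet_Ioo] with z hq hz
    exact mul_pos hq (hl' (Ioo_subset_Ico_self hz)).1.2.1
  filter_upwards [Ico_mem_nhdsLT hlc'] with z hz
  obtain ⟨⟨hzI, -, hΔ⟩, -⟩ := hl' hz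
  rw [← not_le, ← h0.wronskian_nonneg_iff h1 hzI hΔ, ← h0.wronskian_eq_zero h1 hc hθ, not_le]
  exact hmono ⟨hz.1, hz.2.le⟩ ⟨hlc'.le, le_rfl⟩ hz.2

theorem le_of_ae_nonneg {x₀ x₁ : ℝ} (hI : Ico x₀ x₁ ⊆ Ioo a b) (hθ : θ0 x₀ ≤ θ1 x₀)
    (hq : ∀ᵐ x ∂volume.restrict (Ioo x₀ x₁), 0 ≤ q0 x - q1 x) :
    ∀ x ∈ Ico x₀ x₁, θ0 x ≤ θ1 x :=
  le_of_eventually_le_nhdsGT (h0.continuousOn.mono hI) (h1.continuousOn.mono hI) hθ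
    fun _ hc hθc => h0.eventually_le_nhdsGT h1 (hI hc) hθc hc.2
      (ae_restrict_of_ae_restrict_of_subset (Ioo_subset_Ioo_left hc.1) hq)

theorem lt_of_ae_pos {x₀ x₁ : ℝ} (hI : Ico x₀ x₁ ⊆ Ioo a b) (hθ : θ0 x₀ ≤ θ1 x₀)
    (hq : ∀ᵐ x ∂volume.restrict (Ioo x₀ x₁), 0 < q0 x - q1 x) :
    ∀ x ∈ Ioo x₀ x₁, θ0 x < θ1 x :=
  lt_of_eventually_le_nhdsGT_of_eventually_lt_nhdsLT (h0.continuousOn.mono hI)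
    (h1.continuousOn.mono hI) hθ
    (fun _ hc hθc => h0.eventually_le_nhdsGT h1 (hI hc) hθc hc.2
      (ae_restrict_of_ae_restrict_of_subset (Ioo_subset_Ioo_left hc.1) (hq.mono fun _ h => h.le)))
    fun _ hc hθc => h0.eventually_lt_nhdsLT h1 (hI (Ioo_subset_Ico_self hc)) hθc hc.1
      (ae_restrict_of_ae_restrict_of_subset (Ioo_subset_Ioo_right hc.2.le) hq)

end PruferSolution

theorem pruefer_angle_difference_sign_general
    (a b : ℝ) (p q0 q1 u0 u0' u1 u1' ρ0 θ0 ρ1 θ1 : ℝ → ℝ)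
    (x0 ε : ℝ) (hx0 : x0 ∈ Ioo a b) (hsub : Ioo x0 (x0 + ε) ⊆ Ioo a b)
    (hu0 : ∀ x ∈ Ioo a b, HasDerivAt u0 (u0' x) x)
    (hu1 : ∀ x ∈ Ioo a b, HasDerivAt u1 (u1' x) x)
    (hpu0 : ∀ x ∈ Ioo a b, HasDerivAt (fun y => p y * u0' y) (q0 x * u0 x) x)
    (hpu1 : ∀ x ∈ Ioo a b, HasDerivAt (fun y => p y * u1' y) (q1 x * u1 x) x)
    (hθ0 : ContinuousOn θ0 (Ioo a b)) (hθ1 : ContinuousOn θ1 (Ioo a b))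
    (hpr0 : ∀ x ∈ Ioo a b, 0 < ρ0 x ∧ u0 x = ρ0 x * sin (θ0 x) ∧
      p x * u0' x = ρ0 x * cos (θ0 x))
    (hpr1 : ∀ x ∈ Ioo a b, 0 < ρ1 x ∧ u1 x = ρ1 x * sin (θ1 x) ∧
      p x * u1' x = ρ1 x * cos (θ1 x))
    (hΔ : ∃ k : ℤ, θ1 x0 - θ0 x0 = k * π) :
    ((∀ᵐ x ∂(volume.restrict (Ioo x0 (x0 + ε))), 0 < q0 x - q1 x) →
      ∀ x ∈ Ioo x0 (x0 + ε), θ1 x0 - θ0 x0 < θ1 x - θ0 x) ∧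
    ((∀ᵐ x ∂(volume.restrict (Ioo x0 (x0 + ε))), q0 x - q1 x < 0) →
      ∀ x ∈ Ioo x0 (x0 + ε), θ1 x - θ0 x < θ1 x0 - θ0 x0) ∧
    ((∀ᵐ x ∂(volume.restrict (Ioo x0 (x0 + ε))), q0 x = q1 x) →
      ∀ x ∈ Ioo x0 (x0 + ε), θ1 x - θ0 x = θ1 x0 - θ0 x0) := by
  obtain ⟨k, hk⟩ := hΔ
  have h0 := PruferSolution.add_int_mul_pi ⟨hu0, hpu0, hθ0, hpr0⟩ k
  have h1 : PruferSolution a b p q1 u1 u1' ρ1 θ1 := ⟨hu1, hpu1, hθ1, hpr1⟩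
  have hI : Ico x0 (x0 + ε) ⊆ Ioo a b := fun x hx =>
    hx.1.eq_or_lt.elim (· ▸ hx0) fun h => hsub ⟨h, hx.2⟩
  have hθ : θ0 x0 + k * π = θ1 x0 := by linarith
  refine ⟨fun hq x hx => ?_, fun hq x hx => ?_, fun hq x hx => ?_⟩
  · linarith [h0.lt_of_ae_pos h1 hI hθ.le hq x hx]
  · linarith [h1.lt_of_ae_pos h0 hI hθ.ge (hq.mono fun _ h => by linarith) x hx]
  · linarith [h0.le_of_ae_nonneg h1 hI hθ.le (hq.mono fun _ h => by linarith) x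
      (Ioo_subset_Ico_self hx),
      h1.le_of_ae_nonneg h0 hI hθ.ge (hq.mono fun _ h => by linarith) x (Ioo_subset_Ico_self hx)]

/-- Sign of the Prüfer angle difference near a zero of the Wronskian: if
`Δ = θ₁ - θ₀` is a multiple of `π` at `x₀` and `q₀ - q₁` has a definite sign
a.e. on `(x₀, x₀ + ε)`, then `Δ - Δ(x₀)` has the same sign there. -/
theorem pruefer_angle_difference_sign
    (a b : ℝ) (p q0 q1 u0 u0' u1 u1' ρ0 θ0 ρ1 θ1 : ℝ → ℝ)
    (x0 ε : ℝ) (hx0 : x0 ∈ Ioo a b) (hε : 0 < ε) (hsub : Ioo x0 (x0 + ε) ⊆ Ioo a b)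
    (hp : ∀ x ∈ Ioo a b, 0 < p x)
    (hu0 : ∀ x ∈ Ioo a b, HasDerivAt u0 (u0' x) x)
    (hu1 : ∀ x ∈ Ioo a b, HasDerivAt u1 (u1' x) x)
    (hpu0 : ∀ x ∈ Ioo a b, HasDerivAt (fun y => p y * u0' y) (q0 x * u0 x) x)
    (hpu1 : ∀ x ∈ Ioo a b, HasDerivAt (fun y => p y * u1' y) (q1 x * u1 x) x)
    (hθ0 : ContinuousOn θ0 (Ioo a b)) (hθ1 : ContinuousOn θ1 (Ioo a b))
    (hpr0 : ∀ x ∈ Ioo a b, 0 < ρ0 x ∧ u0 x = ρ0 x * sin (θ0 x) ∧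
      p x * u0' x = ρ0 x * cos (θ0 x))
    (hpr1 : ∀ x ∈ Ioo a b, 0 < ρ1 x ∧ u1 x = ρ1 x * sin (θ1 x) ∧
      p x * u1' x = ρ1 x * cos (θ1 x))
    (hΔ : ∃ k : ℤ, θ1 x0 - θ0 x0 = k * π) :
    ((∀ᵐ x ∂(volume.restrict (Ioo x0 (x0 + ε))), 0 < q0 x - q1 x) →
      ∀ x ∈ Ioo x0 (x0 + ε), θ1 x0 - θ0 x0 < θ1 x - θ0 x) ∧
    ((∀ᵐ x ∂(volume.restrict (Ioo x0 (x0 + ε))), q0 x - q1 x < 0) →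
      ∀ x ∈ Ioo x0 (x0 + ε), θ1 x - θ0 x < θ1 x0 - θ0 x0) ∧
    ((∀ᵐ x ∂(volume.restrict (Ioo x0 (x0 + ε))), q0 x = q1 x) →
      ∀ x ∈ Ioo x0 (x0 + ε), θ1 x - θ0 x = θ1 x0 - θ0 x0) :=
  pruefer_angle_difference_sign_general a b p q0 q1 u0 u0' u1 u1' ρ0 θ0 ρ1 θ1 x0 ε hx0 hsub hu0 hu1
    hpu0 hpu1 hθ0 hθ1 hpr0 hpr1 hΔ
end

section
/- Independence of the relative oscillation count from the chosen solutions: if τ_j u_j = 0 and τ_j v_j = 0 for j = 0, 1 (nontrivial solutions), then the lower counts satisfy |#̲(u₀,u₁) - #̲(v₀,v₁)| ≤ 4, and likewise for the upper counts #̄. -/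
/-!
For two solutions `u`, `v` of the same equation the Wronskian `u (p v') - v (p u')` is constant
and equals `ρᵤ ρᵥ sin (θᵤ - θᵥ)`, so `sin (θᵤ - θᵥ)` either vanishes identically or never; by
continuity `θᵤⱼ - θᵥⱼ` then stays in a fixed interval `[kⱼπ, (kⱼ + 1)π]`. Consequently, at every
point, `(θᵤ₁ - θᵤ₀)/π` and `(θᵥ₁ - θᵥ₀)/π` differ by `k₁ - k₀` up to an error of at most `1`, so
the counts over `(c, d)` differ by at most `2`, and this bound passes to `liminf` and `limsup`.
-/

open Set Real Filter

/-- The weighted sign flip count over `(c,d)` in Prüfer angle variables. -/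
noncomputable def relOscCount (θ₀ θ₁ : ℝ → ℝ) (c d : ℝ) : ℝ :=
  (⌈(θ₁ d - θ₀ d) / π⌉ : ℝ) - (⌊(θ₁ c - θ₀ c) / π⌋ : ℝ) - 1

/-- The filter describing `c ↓ a`, `d ↑ b`. -/
def exhaustFilter (a b : ℝ) : Filter (ℝ × ℝ) := (nhdsWithin a (Ioi a)) ×ˢ (nhdsWithin b (Iio b))

lemma Real.abs_sSup_sub_sSup_le {S T : Set ℝ} {C : ℝ} (hC : 0 ≤ C)
    (hST : ∀ a ∈ S, a - C ∈ T) (hTS : ∀ a ∈ T, a - C ∈ S) :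
    |sSup S - sSup T| ≤ C := by
  rcases S.eq_empty_or_nonempty with rfl | hS
  · rcases T.eq_empty_or_nonempty with rfl | ⟨a, ha⟩
    · simpa using hC
    · exact absurd (hTS a ha) (notMem_empty _)
  have hT : T.Nonempty := let ⟨a, ha⟩ := hS; ⟨_, hST a ha⟩
  by_cases hbT : BddAbove T
  · have hbS : BddAbove S := ⟨sSup T + C, fun a ha => by linarith [le_csSup hbT (hST a ha)]⟩
    have hTS' : sSup T ≤ sSup S + C := csSup_le hT fun a ha => by
      linarith [le_csSup hbS (hTS a ha)]
    have hST' : sSup S ≤ sSup T + C := csSup_le hS fun a ha => by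
      linarith [le_csSup hbT (hST a ha)]
    exact abs_le.2 ⟨by linarith, by linarith⟩
  · have hbS : ¬ BddAbove S := fun ⟨M, hM⟩ =>
      hbT ⟨M + C, fun a ha => by linarith [hM (hTS a ha)]⟩
    simpa [Real.sSup_of_not_bddAbove hbT, Real.sSup_of_not_bddAbove hbS] using hC

lemma abs_liminf_sub_liminf_le {α : Type*} {F : Filter α} {f g : α → ℝ} {C : ℝ} (hC : 0 ≤ C)
    (h : ∀ᶠ x in F, |f x - g x| ≤ C) :
    |liminf f F - liminf g F| ≤ C := by
  rw [liminf_eq, liminf_eq]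
  refine Real.abs_sSup_sub_sSup_le hC (fun r hr => ?_) (fun r hr => ?_) <;>
  · filter_upwards [h, hr] with x hx hrx
    linarith [abs_le.1 hx]

lemma Real.limsup_eq_neg_liminf_neg {α : Type*} (F : Filter α) (f : α → ℝ) :
    limsup f F = -liminf (-f) F := by
  rw [limsup_eq, liminf_eq, Real.sInf_def]
  congr 2
  ext a
  simp [le_neg]

lemma abs_limsup_sub_limsup_le {α : Type*} {F : Filter α} {f g : α → ℝ} {C : ℝ} (hC : 0 ≤ C)
    (h : ∀ᶠ x in F, |f x - g x| ≤ C) :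
    |limsup f F - limsup g F| ≤ C := by
  rw [Real.limsup_eq_neg_liminf_neg, Real.limsup_eq_neg_liminf_neg, neg_sub_neg, abs_sub_comm]
  refine abs_liminf_sub_liminf_le hC ?_
  filter_upwards [h] with x hx
  simpa [abs_sub_comm, neg_add_eq_sub] using hx

lemma Int.abs_ceil_sub_ceil_sub_le {α : Type*} [Field α] [LinearOrder α] [IsStrictOrderedRing α]
    [FloorRing α] {x y : α} {m : ℤ} (h : |x - y - m| ≤ 1) :
    |(⌈x⌉ - ⌈y⌉ - m : α)| ≤ 1 := by
  obtain ⟨h₁, h₂⟩ := abs_le.1 h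
  have hup : ⌈x⌉ ≤ ⌈y⌉ + (m + 1) := by
    rw [← Int.ceil_add_intCast]; exact Int.ceil_le_ceil (by push_cast; linarith)
  have hlow : ⌈y⌉ + (m - 1) ≤ ⌈x⌉ := by
    rw [← Int.ceil_add_intCast]; exact Int.ceil_le_ceil (by push_cast; linarith)
  have hup' : (⌈x⌉ : α) ≤ ⌈y⌉ + (m + 1) := by exact_mod_cast hup
  have hlow' : (⌈y⌉ : α) + (m - 1) ≤ ⌈x⌉ := by exact_mod_cast hlow
  exact abs_le.2 ⟨by linarith, by linarith⟩

lemma Int.abs_floor_sub_floor_sub_le {α : Type*} [Field α] [LinearOrder α] [IsStrictOrderedRing α]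
    [FloorRing α] {x y : α} {m : ℤ} (h : |x - y - m| ≤ 1) :
    |(⌊x⌋ - ⌊y⌋ - m : α)| ≤ 1 := by
  obtain ⟨h₁, h₂⟩ := abs_le.1 h
  have hup : ⌊x⌋ ≤ ⌊y⌋ + (m + 1) := by
    rw [← Int.floor_add_intCast]; exact Int.floor_le_floor (by push_cast; linarith)
  have hlow : ⌊y⌋ + (m - 1) ≤ ⌊x⌋ := by
    rw [← Int.floor_add_intCast]; exact Int.floor_le_floor (by push_cast; linarith)
  have hup' : (⌊x⌋ : α) ≤ ⌊y⌋ + (m + 1) := by exact_mod_cast hup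
  have hlow' : (⌊y⌋ : α) + (m - 1) ≤ ⌊x⌋ := by exact_mod_cast hlow
  exact abs_le.2 ⟨by linarith, by linarith⟩

lemma Real.sin_ne_zero_of_mem_Ioo {x : ℝ} {n : ℤ} (hx : x ∈ Ioo (n * π) ((n + 1) * π)) :
    sin x ≠ 0 := by
  refine sin_ne_zero_iff.2 fun m hm => ?_
  have hlt : n < m := by
    have := hx.1; rw [← hm] at this; exact_mod_cast lt_of_mul_lt_mul_right this pi_pos.le
  have hgt : m < n + 1 := by
    have := hx.2; rw [← hm] at this; exact_mod_cast lt_of_mul_lt_mul_right this pi_pos.le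
  omega

lemma exists_subset_Icc_int_mul_pi {J : Set ℝ} (hJ : J.OrdConnected)
    (hsin : (∀ x ∈ J, sin x = 0) ∨ ∀ x ∈ J, sin x ≠ 0) :
    ∃ k : ℤ, J ⊆ Icc (k * π) ((k + 1) * π) := by
  rcases J.eq_empty_or_nonempty with rfl | ⟨y₀, hy₀⟩
  · exact ⟨0, empty_subset _⟩
  have hpi := pi_pos
  have key : ∀ n : ℤ, (n : ℝ) * π ∈ J → ∀ z ∈ J, sin z ≠ 0 → False := by
    intro n hn z hz hz0
    rcases hsin with h | h
    · exact hz0 (h z hz)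
    · exact h _ hn (sin_int_mul_pi n)
  set k := ⌊y₀ / π⌋
  have hk₁ : (k : ℝ) * π ≤ y₀ := (le_div_iff₀ hpi).1 (Int.floor_le _)
  have hk₂ : y₀ < (k + 1) * π := (div_lt_iff₀ hpi).1 (Int.lt_floor_add_one _)
  -- A point `y ∈ J` outside the interval forces into `J` the multiple of `π` between `y` and
  -- `y₀`, and a point of the neighbouring open interval, where `sin` does not vanish.
  refine ⟨k, fun y hy => ⟨?_, ?_⟩⟩
  · by_contra! hlt
    refine key k (hJ.out hy hy₀ ⟨hlt.le, hk₁⟩) (max y ((k - 1 / 2) * π))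
      (hJ.out hy hy₀ ⟨le_max_left _ _, max_le (by linarith) (by nlinarith)⟩)
      (sin_ne_zero_of_mem_Ioo (n := k - 1) ⟨?_, ?_⟩)
    · push_cast; exact lt_max_of_lt_right (by nlinarith)
    · push_cast; exact max_lt (by linarith) (by nlinarith)
  · by_contra! hgt
    refine key (k + 1) (hJ.out hy₀ hy ⟨by push_cast; linarith, by push_cast; linarith⟩)
      (min y ((k + 3 / 2) * π))
      (hJ.out hy₀ hy ⟨le_min (by linarith) (by nlinarith), min_le_left _ _⟩)
      (sin_ne_zero_of_mem_Ioo (n := k + 1) ⟨?_, ?_⟩)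
    · push_cast; exact lt_min hgt (by nlinarith)
    · push_cast; exact min_lt_of_right_lt (by nlinarith)

section Wronskian

variable {a b : ℝ} {p q u u' v v' ρu θu ρv θv : ℝ → ℝ}

lemma exists_wronskian_eq_const
    (hu : ∀ x ∈ Ioo a b, HasDerivAt u (u' x) x ∧ HasDerivAt (fun y => p y * u' y) (q x * u x) x)
    (hv : ∀ x ∈ Ioo a b, HasDerivAt v (v' x) x ∧ HasDerivAt (fun y => p y * v' y) (q x * v x) x) :
    ∃ W, ∀ x ∈ Ioo a b, u x * (p x * v' x) - v x * (p x * u' x) = W := by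
  have hW : ∀ x ∈ Ioo a b,
      HasDerivAt (fun y => u y * (p y * v' y) - v y * (p y * u' y)) 0 x := fun x hx =>
    (((hu x hx).1.mul (hv x hx).2).sub ((hv x hx).1.mul (hu x hx).2)).congr_deriv (by ring)
  exact isOpen_Ioo.exists_is_const_of_deriv_eq_zero isPreconnected_Ioo
    (fun x hx => (hW x hx).differentiableAt.differentiableWithinAt) (fun x hx => (hW x hx).deriv)

lemma exists_prufer_angle_sub_mem_Icc
    (hu : ∀ x ∈ Ioo a b, HasDerivAt u (u' x) x ∧ HasDerivAt (fun y => p y * u' y) (q x * u x) x)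
    (hv : ∀ x ∈ Ioo a b, HasDerivAt v (v' x) x ∧ HasDerivAt (fun y => p y * v' y) (q x * v x) x)
    (hθu : ContinuousOn θu (Ioo a b)) (hθv : ContinuousOn θv (Ioo a b))
    (hpru : ∀ x ∈ Ioo a b, 0 < ρu x ∧ u x = ρu x * sin (θu x) ∧ p x * u' x = ρu x * cos (θu x))
    (hprv : ∀ x ∈ Ioo a b, 0 < ρv x ∧ v x = ρv x * sin (θv x) ∧ p x * v' x = ρv x * cos (θv x)) :
    ∃ k : ℤ, ∀ x ∈ Ioo a b, θu x - θv x ∈ Icc (k * π) ((k + 1) * π) := by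
  obtain ⟨W, hW⟩ := exists_wronskian_eq_const hu hv
  have hWsin : ∀ x ∈ Ioo a b, ρu x * ρv x * sin (θu x - θv x) = W := fun x hx => by
    obtain ⟨-, hu₁, hu₂⟩ := hpru x hx
    obtain ⟨-, hv₁, hv₂⟩ := hprv x hx
    rw [← hW x hx, hu₁, hv₁, hu₂, hv₂, sin_sub]
    ring
  have hρ : ∀ x ∈ Ioo a b, ρu x * ρv x ≠ 0 := fun x hx =>
    (mul_pos (hpru x hx).1 (hprv x hx).1).ne'
  have hJ : ((fun x => θu x - θv x) '' Ioo a b).OrdConnected :=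
    (isPreconnected_Ioo.image _ (hθu.sub hθv)).ordConnected
  have hsin : (∀ y ∈ (fun x => θu x - θv x) '' Ioo a b, sin y = 0) ∨
      ∀ y ∈ (fun x => θu x - θv x) '' Ioo a b, sin y ≠ 0 := by
    rcases eq_or_ne W 0 with rfl | hW0
    · exact Or.inl <| forall_mem_image.2 fun x hx =>
        (mul_eq_zero.1 (hWsin x hx)).resolve_left (hρ x hx)
    · exact Or.inr <| forall_mem_image.2 fun x hx h0 => hW0 <| by
        rw [← hWsin x hx, h0, mul_zero]
  obtain ⟨k, hk⟩ := exists_subset_Icc_int_mul_pi hJ hsin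
  exact ⟨k, fun x hx => hk (mem_image_of_mem _ hx)⟩

end Wronskian

lemma abs_div_pi_sub_div_pi_sub_le {α₀ β₀ α₁ β₁ : ℝ} {k₀ k₁ : ℤ}
    (h₀ : α₀ - β₀ ∈ Icc (k₀ * π) ((k₀ + 1) * π)) (h₁ : α₁ - β₁ ∈ Icc (k₁ * π) ((k₁ + 1) * π)) :
    |(α₁ - α₀) / π - (β₁ - β₀) / π - ((k₁ - k₀ : ℤ) : ℝ)| ≤ 1 := by
  have hpi := pi_pos
  have h : (α₁ - α₀) / π - (β₁ - β₀) / π - ((k₁ - k₀ : ℤ) : ℝ) =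
      ((α₁ - β₁) - (α₀ - β₀) - (k₁ - k₀) * π) / π := by
    push_cast; field_simp; ring
  rw [h, abs_div, abs_of_pos hpi, div_le_one hpi, abs_le]
  constructor <;> nlinarith [h₀.1, h₀.2, h₁.1, h₁.2]

lemma abs_relOscCount_sub_relOscCount_le {θu0 θu1 θv0 θv1 : ℝ → ℝ} {c d : ℝ} {m : ℤ}
    (hc : |(θu1 c - θu0 c) / π - (θv1 c - θv0 c) / π - m| ≤ 1)
    (hd : |(θu1 d - θu0 d) / π - (θv1 d - θv0 d) / π - m| ≤ 1) :
    |relOscCount θu0 θu1 c d - relOscCount θv0 θv1 c d| ≤ 2 := by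
  have hceil := Int.abs_ceil_sub_ceil_sub_le hd
  have hfloor := Int.abs_floor_sub_floor_sub_le hc
  calc |relOscCount θu0 θu1 c d - relOscCount θv0 θv1 c d|
      = |(⌈(θu1 d - θu0 d) / π⌉ - ⌈(θv1 d - θv0 d) / π⌉ - m : ℝ) -
          (⌊(θu1 c - θu0 c) / π⌋ - ⌊(θv1 c - θv0 c) / π⌋ - m : ℝ)| := by
        unfold relOscCount; ring_nf
    _ ≤ 1 + 1 := (abs_sub _ _).trans (add_le_add hceil hfloor)
    _ = 2 := by norm_num

theorem relOsc_count_solution_independent_general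
    (a b : ℝ) (hab : a < b) (p q0 q1 : ℝ → ℝ)
    (u0 u0' u1 u1' v0 v0' v1 v1' : ℝ → ℝ)
    (ρu0 θu0 ρu1 θu1 ρv0 θv0 ρv1 θv1 : ℝ → ℝ)
    (hu0 : ∀ x ∈ Ioo a b, HasDerivAt u0 (u0' x) x ∧
      HasDerivAt (fun y => p y * u0' y) (q0 x * u0 x) x)
    (hu1 : ∀ x ∈ Ioo a b, HasDerivAt u1 (u1' x) x ∧
      HasDerivAt (fun y => p y * u1' y) (q1 x * u1 x) x)
    (hv0 : ∀ x ∈ Ioo a b, HasDerivAt v0 (v0' x) x ∧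
      HasDerivAt (fun y => p y * v0' y) (q0 x * v0 x) x)
    (hv1 : ∀ x ∈ Ioo a b, HasDerivAt v1 (v1' x) x ∧
      HasDerivAt (fun y => p y * v1' y) (q1 x * v1 x) x)
    (hpru0 : ContinuousOn θu0 (Ioo a b) ∧ ∀ x ∈ Ioo a b, 0 < ρu0 x ∧
      u0 x = ρu0 x * sin (θu0 x) ∧ p x * u0' x = ρu0 x * cos (θu0 x))
    (hpru1 : ContinuousOn θu1 (Ioo a b) ∧ ∀ x ∈ Ioo a b, 0 < ρu1 x ∧
      u1 x = ρu1 x * sin (θu1 x) ∧ p x * u1' x = ρu1 x * cos (θu1 x))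
    (hprv0 : ContinuousOn θv0 (Ioo a b) ∧ ∀ x ∈ Ioo a b, 0 < ρv0 x ∧
      v0 x = ρv0 x * sin (θv0 x) ∧ p x * v0' x = ρv0 x * cos (θv0 x))
    (hprv1 : ContinuousOn θv1 (Ioo a b) ∧ ∀ x ∈ Ioo a b, 0 < ρv1 x ∧
      v1 x = ρv1 x * sin (θv1 x) ∧ p x * v1' x = ρv1 x * cos (θv1 x)) :
    |Filter.liminf (fun cd : ℝ × ℝ => relOscCount θu0 θu1 cd.1 cd.2) (exhaustFilter a b) -
      Filter.liminf (fun cd : ℝ × ℝ => relOscCount θv0 θv1 cd.1 cd.2) (exhaustFilter a b)| ≤ 4 ∧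
    |Filter.limsup (fun cd : ℝ × ℝ => relOscCount θu0 θu1 cd.1 cd.2) (exhaustFilter a b) -
      Filter.limsup (fun cd : ℝ × ℝ => relOscCount θv0 θv1 cd.1 cd.2) (exhaustFilter a b)| ≤ 4 := by
  obtain ⟨k0, hk0⟩ := exists_prufer_angle_sub_mem_Icc hu0 hv0 hpru0.1 hprv0.1 hpru0.2 hprv0.2
  obtain ⟨k1, hk1⟩ := exists_prufer_angle_sub_mem_Icc hu1 hv1 hpru1.1 hprv1.1 hpru1.2 hprv1.2
  have hIoo : Ioo a b ×ˢ Ioo a b ∈ exhaustFilter a b :=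
    prod_mem_prod (Ioo_mem_nhdsGT hab) (Ioo_mem_nhdsLT hab)
  have hclose : ∀ᶠ cd : ℝ × ℝ in exhaustFilter a b,
      |relOscCount θu0 θu1 cd.1 cd.2 - relOscCount θv0 θv1 cd.1 cd.2| ≤ 4 := by
    filter_upwards [hIoo] with ⟨c, d⟩ ⟨hc, hd⟩
    exact (abs_relOscCount_sub_relOscCount_le
      (abs_div_pi_sub_div_pi_sub_le (hk0 c hc) (hk1 c hc))
      (abs_div_pi_sub_div_pi_sub_le (hk0 d hd) (hk1 d hd))).trans (by norm_num)
  exact ⟨abs_liminf_sub_liminf_le (by norm_num) hclose,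
    abs_limsup_sub_limsup_le (by norm_num) hclose⟩

/-- Independence of the relative oscillation counts from the chosen solutions:
for nontrivial solutions `τⱼ uⱼ = 0`, `τⱼ vⱼ = 0` with Prüfer angles `θuⱼ`, `θvⱼ`,
the liminf (and limsup) of the weighted sign flip counts for the pairs `(u₀,u₁)`
and `(v₀,v₁)` differ by at most `4`. -/
theorem relOsc_count_solution_independent
    (a b : ℝ) (hab : a < b) (p q0 q1 : ℝ → ℝ)
    (u0 u0' u1 u1' v0 v0' v1 v1' : ℝ → ℝ)
    (ρu0 θu0 ρu1 θu1 ρv0 θv0 ρv1 θv1 : ℝ → ℝ)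
    (hp : ∀ x ∈ Ioo a b, 0 < p x)
    (hu0 : ∀ x ∈ Ioo a b, HasDerivAt u0 (u0' x) x ∧
      HasDerivAt (fun y => p y * u0' y) (q0 x * u0 x) x)
    (hu1 : ∀ x ∈ Ioo a b, HasDerivAt u1 (u1' x) x ∧
      HasDerivAt (fun y => p y * u1' y) (q1 x * u1 x) x)
    (hv0 : ∀ x ∈ Ioo a b, HasDerivAt v0 (v0' x) x ∧
      HasDerivAt (fun y => p y * v0' y) (q0 x * v0 x) x)
    (hv1 : ∀ x ∈ Ioo a b, HasDerivAt v1 (v1' x) x ∧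
      HasDerivAt (fun y => p y * v1' y) (q1 x * v1 x) x)
    (hpru0 : ContinuousOn θu0 (Ioo a b) ∧ ∀ x ∈ Ioo a b, 0 < ρu0 x ∧
      u0 x = ρu0 x * sin (θu0 x) ∧ p x * u0' x = ρu0 x * cos (θu0 x))
    (hpru1 : ContinuousOn θu1 (Ioo a b) ∧ ∀ x ∈ Ioo a b, 0 < ρu1 x ∧
      u1 x = ρu1 x * sin (θu1 x) ∧ p x * u1' x = ρu1 x * cos (θu1 x))
    (hprv0 : ContinuousOn θv0 (Ioo a b) ∧ ∀ x ∈ Ioo a b, 0 < ρv0 x ∧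
      v0 x = ρv0 x * sin (θv0 x) ∧ p x * v0' x = ρv0 x * cos (θv0 x))
    (hprv1 : ContinuousOn θv1 (Ioo a b) ∧ ∀ x ∈ Ioo a b, 0 < ρv1 x ∧
      v1 x = ρv1 x * sin (θv1 x) ∧ p x * v1' x = ρv1 x * cos (θv1 x)) :
    |Filter.liminf (fun cd : ℝ × ℝ => relOscCount θu0 θu1 cd.1 cd.2) (exhaustFilter a b) -
      Filter.liminf (fun cd : ℝ × ℝ => relOscCount θv0 θv1 cd.1 cd.2) (exhaustFilter a b)| ≤ 4 ∧
    |Filter.limsup (fun cd : ℝ × ℝ => relOscCount θu0 θu1 cd.1 cd.2) (exhaustFilter a b) -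
      Filter.limsup (fun cd : ℝ × ℝ => relOscCount θv0 θv1 cd.1 cd.2) (exhaustFilter a b)| ≤ 4 :=
  relOsc_count_solution_independent_general a b hab p q0 q1 u0 u0' u1 u1' v0 v0' v1 v1' ρu0 θu0 ρu1
    θu1 ρv0 θv0 ρv1 θv1 hu0 hu1 hv0 hv1 hpru0 hpru1 hprv0 hprv1
end
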